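/- arXiv:1607.03619 — 2 statements merged into one kernel-verified Lean document; each statement's English description precedes it below -/
import Mathlib

section
/- Let ξ₁,…,ξ_D be independent real-valued random variables and η a counting random variable independent of them with P(η ≤ D) = 1. If for every n in the support of η the distribution function of Sₙ = ξ₁+⋯+ξₙ has a consistently varying tail, then the distribution function of the randomly stopped sum S_η has a consistently varying tail. -/
/-!
Since `η` is independent of `(ξ k)ₖ`, for `x ≥ 0` the tail of `S_η` is the finite mixture
`P(S_η > x) = ∑ₙ P(η = n) P(Sₙ > x)` over the `n ≥ 1` with `P(η = n) > 0` (`S₀ = 0` has no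
tail beyond `0`, and `η ≤ D` almost surely). For a nonincreasing, eventually positive `T` the
ratio `T(xy)/T(x)` is at least `1` when `y < 1`, so consistent variation amounts to: for each
`δ > 0` and every `y < 1` close enough to `1`, eventually `T(xy) ≤ (1 + δ) T(x)`. This bound
passes termwise to finite combinations with positive weights.
-/

open Filter MeasureTheory Topology

/-- The tail function of a real random variable: `x ↦ P(X > x)`. -/
noncomputable def tailDist {Ω : Type*} [MeasurableSpace Ω] (μ : Measure Ω)
    (X : Ω → ℝ) : ℝ → ℝ :=
  fun x => (μ {ω | x < X ω}).toReal

/-- A tail function `T` is consistently varying: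
`lim_{y↑1} limsup_{x→∞} T(xy)/T(x) = 1`. -/
def ConsistentlyVarying (T : ℝ → ℝ) : Prop :=
  Tendsto (fun y : ℝ => Filter.limsup (fun x => T (x * y) / T x) atTop)
    (𝓝[<] (1:ℝ)) (𝓝 1)

namespace ConsistentlyVarying

variable {T : ℝ → ℝ}

theorem eventually_pos (hT : ConsistentlyVarying T) (hanti : Antitone T) (hnonneg : 0 ≤ T) :
    ∀ᶠ x in atTop, 0 < T x := by
  -- otherwise `T` vanishes near infinity and every ratio is eventually `0 / 0 = 0`
  by_contra h
  obtain ⟨x₀, hx₀⟩ := (not_eventually.mp h).exists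
  have hzero : ∀ y, limsup (fun x => T (x * y) / T x) atTop = 0 := fun y => by
    refine (limsup_congr ?_).trans (limsup_const 0)
    filter_upwards [eventually_ge_atTop x₀] with x hx
    rw [le_antisymm ((hanti hx).trans (not_lt.mp hx₀)) (hnonneg x), div_zero]
  have hlim : Tendsto (fun _ : ℝ => (0 : ℝ)) (𝓝[<] 1) (𝓝 1) := by
    simpa only [ConsistentlyVarying, hzero] using hT
  exact zero_ne_one (tendsto_nhds_unique tendsto_const_nhds hlim)

theorem eventually_le (hT : ConsistentlyVarying T) (hpos : ∀ᶠ x in atTop, 0 < T x)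
    {δ : ℝ} (hδ : 0 < δ) :
    ∀ᶠ y in 𝓝[<] 1, ∀ᶠ x in atTop, T (x * y) ≤ (1 + δ) * T x := by
  filter_upwards [Metric.tendsto_nhds.mp hT (min δ 1) (lt_min hδ one_pos)] with y hy
  rw [Real.dist_eq, abs_lt] at hy
  have hlt : limsup (fun x => T (x * y) / T x) atTop < 1 + δ := by
    linarith [min_le_left δ 1]
  -- the limsup is positive, so it is not the junk value of an unbounded function
  have hbdd : IsBoundedUnder (· ≤ ·) atTop (fun x => T (x * y) / T x) := by
    by_contra hnot
    rw [Real.limsup_of_not_isBoundedUnder hnot] at hy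
    linarith [min_le_right δ 1]
  filter_upwards [eventually_lt_of_limsup_lt hlt hbdd, hpos] with x hx hTx
  exact ((div_lt_iff₀ hTx).mp hx).le

end ConsistentlyVarying

theorem consistentlyVarying_of_eventually_le {T : ℝ → ℝ} (hanti : Antitone T)
    (hpos : ∀ᶠ x in atTop, 0 < T x)
    (hle : ∀ δ > 0, ∀ᶠ y in 𝓝[<] 1, ∀ᶠ x in atTop, T (x * y) ≤ (1 + δ) * T x) :
    ConsistentlyVarying T := by
  refine Metric.tendsto_nhds.mpr fun ε hε => ?_
  filter_upwards [hle (ε / 2) (half_pos hε), self_mem_nhdsWithin] with y hy hy1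
  have hratio : ∀ᶠ x in atTop, 1 ≤ T (x * y) / T x ∧ T (x * y) / T x ≤ 1 + ε / 2 := by
    filter_upwards [hy, hpos, eventually_gt_atTop 0] with x hxy hTx hx
    have hmono : T x ≤ T (x * y) := hanti (mul_le_of_le_one_right hx.le hy1.le)
    exact ⟨(one_le_div hTx).mpr hmono, (div_le_iff₀ hTx).mpr hxy⟩
  have hupper := hratio.mono fun _ h => h.2
  have hlower := hratio.mono fun _ h => h.1
  have hL₁ : limsup (fun x => T (x * y) / T x) atTop ≤ 1 + ε / 2 :=
    limsup_le_of_le (IsCoboundedUnder.of_frequently_ge hlower.frequently) hupper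
  have hL₀ : 1 ≤ limsup (fun x => T (x * y) / T x) atTop :=
    le_limsup_of_frequently_le hlower.frequently ⟨_, hupper⟩
  rw [Real.dist_eq, abs_lt]
  constructor <;> linarith

theorem consistentlyVarying_of_eventually_eq_sum {ι : Type*} {s : Finset ι} {c : ι → ℝ}
    {f : ι → ℝ → ℝ} {T : ℝ → ℝ} (hanti : Antitone T) (hs : s.Nonempty) (hc : ∀ i ∈ s, 0 < c i)
    (hf : ∀ i ∈ s, ConsistentlyVarying (f i)) (hf_anti : ∀ i ∈ s, Antitone (f i))
    (hf_nonneg : ∀ i ∈ s, 0 ≤ f i) (hsum : ∀ᶠ x in atTop, T x = ∑ i ∈ s, c i * f i x) :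
    ConsistentlyVarying T := by
  have hf_pos : ∀ i ∈ s, ∀ᶠ x in atTop, 0 < f i x := fun i hi =>
    (hf i hi).eventually_pos (hf_anti i hi) (hf_nonneg i hi)
  have hpos : ∀ᶠ x in atTop, 0 < T x := by
    obtain ⟨i₀, hi₀⟩ := hs
    filter_upwards [hsum, hf_pos i₀ hi₀] with x hx hfx
    rw [hx]
    exact Finset.sum_pos' (fun i hi => mul_nonneg (hc i hi).le (hf_nonneg i hi x))
      ⟨i₀, hi₀, mul_pos (hc i₀ hi₀) hfx⟩
  refine consistentlyVarying_of_eventually_le hanti hpos fun δ hδ => ?_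
  have hfle : ∀ᶠ y in 𝓝[<] 1, ∀ i ∈ s, ∀ᶠ x in atTop, f i (x * y) ≤ (1 + δ) * f i x :=
    (eventually_all_finset s).mpr fun i hi => (hf i hi).eventually_le (hf_pos i hi) hδ
  have hy₀ : ∀ᶠ y in 𝓝[<] (1 : ℝ), 0 < y :=
    eventually_nhdsWithin_of_eventually_nhds (lt_mem_nhds one_pos)
  filter_upwards [hfle, hy₀] with y hy hy₀
  filter_upwards [(eventually_all_finset s).mpr hy, hsum,
    (tendsto_id.atTop_mul_const hy₀ : Tendsto (· * y) atTop atTop).eventually hsum]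
    with x hx hTx hTxy
  rw [hTxy, hTx, Finset.mul_sum]
  exact Finset.sum_le_sum fun i hi => by nlinarith [hx i hi, hc i hi]

theorem tailDist_antitone {Ω : Type*} [MeasurableSpace Ω] (μ : Measure Ω) [IsFiniteMeasure μ]
    (X : Ω → ℝ) : Antitone (tailDist μ X) := fun _ _ hab =>
  ENNReal.toReal_mono (measure_ne_top μ _) (measure_mono fun _ hω => lt_of_le_of_lt hab hω)

theorem measure_eq_zero_of_ae_le_of_lt {Ω α : Type*} [MeasurableSpace Ω] [Preorder α]
    {μ : Measure Ω} {η : Ω → α} {D n : α} (hηD : ∀ᵐ ω ∂μ, η ω ≤ D) (hn : D < n) :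
    μ {ω | η ω = n} = 0 :=
  measure_mono_null (fun ω (hω : η ω = n) (hle : η ω ≤ D) => (hn.trans_le (hω ▸ hle)).false)
    (ae_iff.mp hηD)

theorem ProbabilityTheory.IndepFun.measure_mem_indexed_eq_tsum {Ω β : Type*} [MeasurableSpace Ω]
    [MeasurableSpace β] {μ : Measure Ω} {η : Ω → ℕ} {Z : Ω → β} (h : IndepFun η Z μ)
    (hη : Measurable η) (hZ : Measurable Z) {A : ℕ → Set β} (hA : ∀ n, MeasurableSet (A n)) :
    μ {ω | Z ω ∈ A (η ω)} = ∑' n, μ {ω | η ω = n} * μ (Z ⁻¹' A n) := by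
  have hunion : {ω | Z ω ∈ A (η ω)} = ⋃ n, η ⁻¹' {n} ∩ Z ⁻¹' A n := by
    ext ω
    simp
  rw [hunion, measure_iUnion]
  · exact tsum_congr fun n =>
      h.measure_inter_preimage_eq_mul _ _ (measurableSet_singleton n) (hA n)
  · exact fun m n hmn => Disjoint.mono Set.inter_subset_left Set.inter_subset_left
      ((Set.disjoint_singleton.mpr hmn).preimage η)
  · exact fun n => (hη (measurableSet_singleton n)).inter (hZ (hA n))

open Classical in
theorem tailDist_randomlyStoppedSum {Ω : Type*} [MeasurableSpace Ω] {μ : Measure Ω}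
    [IsFiniteMeasure μ] {D : ℕ} {ξ : ℕ → Ω → ℝ} {η : Ω → ℕ} (hmeas : ∀ k, Measurable (ξ k))
    (hηmeas : Measurable η) (hindepη : ProbabilityTheory.IndepFun η (fun ω => fun k => ξ k ω) μ)
    (hηD : ∀ᵐ ω ∂μ, η ω ≤ D) {x : ℝ} (hx : 0 ≤ x) :
    tailDist μ (fun ω => ∑ k ∈ Finset.Icc 1 (η ω), ξ k ω) x =
      ∑ n ∈ (Finset.Icc 1 D).filter (fun n => 0 < μ {ω | η ω = n}),
        (μ {ω | η ω = n}).toReal * tailDist μ (fun ω => ∑ k ∈ Finset.Icc 1 n, ξ k ω) x := by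
  have hA : ∀ n, MeasurableSet {f : ℕ → ℝ | x < ∑ k ∈ Finset.Icc 1 n, f k} := fun n =>
    measurableSet_lt measurable_const (Finset.measurable_sum _ fun k _ => measurable_pi_apply k)
  have hdecomp : μ {ω | x < ∑ k ∈ Finset.Icc 1 (η ω), ξ k ω} =
      ∑' n, μ {ω | η ω = n} * μ {ω | x < ∑ k ∈ Finset.Icc 1 n, ξ k ω} :=
    hindepη.measure_mem_indexed_eq_tsum hηmeas (measurable_pi_lambda _ hmeas) hA
  simp only [tailDist]
  rw [hdecomp, tsum_eq_sum, ENNReal.toReal_sum fun n _ =>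
    ENNReal.mul_ne_top (measure_ne_top _ _) (measure_ne_top _ _)]
  · exact Finset.sum_congr rfl fun n _ => ENNReal.toReal_mul
  intro n hn
  simp only [Finset.mem_filter, Finset.mem_Icc, not_and_or, not_le, not_lt, nonpos_iff_eq_zero,
    Nat.lt_one_iff] at hn
  rcases hn with (rfl | hDn) | hzero
  · simp [not_lt.mpr hx]
  · rw [measure_eq_zero_of_ae_le_of_lt hηD hDn, zero_mul]
  · rw [hzero, zero_mul]

open Classical in
theorem nonempty_filter_measure_pos {Ω : Type*} [MeasurableSpace Ω] {μ : Measure Ω}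
    [IsProbabilityMeasure μ] {D : ℕ} {η : Ω → ℕ} (hηmeas : Measurable η)
    (hηD : ∀ᵐ ω ∂μ, η ω ≤ D) (hηnondeg : μ {ω | η ω = 0} < 1) :
    ((Finset.Icc 1 D).filter (fun n => 0 < μ {ω | η ω = n})).Nonempty := by
  by_contra hempty
  simp only [Finset.not_nonempty_iff_eq_empty, Finset.filter_eq_empty_iff, Finset.mem_Icc,
    not_lt, nonpos_iff_eq_zero] at hempty
  have hnull : ∀ n, μ {ω | η ω = n + 1} = 0 := fun n => by
    rcases le_or_gt (n + 1) D with hn | hn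
    · exact hempty ⟨Nat.le_add_left 1 n, hn⟩
    · exact measure_eq_zero_of_ae_le_of_lt hηD hn
  have hcompl : μ {ω | η ω = 0}ᶜ = 0 :=
    measure_mono_null (fun ω (hω : η ω ≠ 0) => Set.mem_iUnion.mpr
      ⟨η ω - 1, show η ω = η ω - 1 + 1 by omega⟩) (measure_iUnion_null hnull)
  have hmeas₀ : MeasurableSet {ω | η ω = 0} := hηmeas (measurableSet_singleton 0)
  rw [prob_compl_eq_zero_iff hmeas₀] at hcompl
  exact hηnondeg.ne hcompl

theorem randomly_stopped_sum_consistently_varying_of_partial_sums_general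
    {Ω : Type*} [MeasurableSpace Ω] (μ : Measure Ω) [IsProbabilityMeasure μ]
    (D : ℕ) (ξ : ℕ → Ω → ℝ) (η : Ω → ℕ)
    (hmeas : ∀ k, Measurable (ξ k)) (hηmeas : Measurable η)
    (hindepη : ProbabilityTheory.IndepFun η (fun ω => fun k => ξ k ω) μ)
    (hηD : ∀ᵐ ω ∂μ, η ω ≤ D)
    (hηnondeg : μ {ω | η ω = 0} < 1)
    (hCV : ∀ n : ℕ, 1 ≤ n → 0 < μ {ω | η ω = n} →
      ConsistentlyVarying (tailDist μ (fun ω => ∑ k ∈ Finset.Icc 1 n, ξ k ω))) :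
    ConsistentlyVarying (tailDist μ (fun ω => ∑ k ∈ Finset.Icc 1 (η ω), ξ k ω)) := by
  refine consistentlyVarying_of_eventually_eq_sum (tailDist_antitone μ _)
    (nonempty_filter_measure_pos hηmeas hηD hηnondeg)
    (fun n hn => ENNReal.toReal_pos (Finset.mem_filter.mp hn).2.ne' (measure_ne_top μ _))
    (fun n hn => hCV n (Finset.mem_Icc.mp (Finset.mem_filter.mp hn).1).1
      (Finset.mem_filter.mp hn).2)
    (fun n _ => tailDist_antitone μ _) (fun n _ x => ENNReal.toReal_nonneg)
    ((eventually_ge_atTop 0).mono fun x hx =>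
      tailDist_randomlyStoppedSum hmeas hηmeas hindepη hηD hx)

/-- If `η` is a counting random variable, bounded by `D`, independent of the
independent r.v.s `ξ₁, ξ₂, …`, and for every `n ≥ 1` in the support of `η` the
distribution of `Sₙ = ξ₁+⋯+ξₙ` has a consistently varying (positive) tail, then
the distribution of the randomly stopped sum `S_η` has a consistently varying
tail. -/
theorem randomly_stopped_sum_consistently_varying_of_partial_sums
    {Ω : Type*} [MeasurableSpace Ω] (μ : Measure Ω) [IsProbabilityMeasure μ]
    (D : ℕ) (ξ : ℕ → Ω → ℝ) (η : Ω → ℕ)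
    (hmeas : ∀ k, Measurable (ξ k)) (hηmeas : Measurable η)
    (hindep : ProbabilityTheory.iIndepFun ξ μ)
    (hindepη : ProbabilityTheory.IndepFun η (fun ω => fun k => ξ k ω) μ)
    (hηD : ∀ᵐ ω ∂μ, η ω ≤ D)
    (hηnondeg : μ {ω | η ω = 0} < 1)
    (hpos : ∀ n : ℕ, 1 ≤ n → 0 < μ {ω | η ω = n} →
      ∀ x, 0 < tailDist μ (fun ω => ∑ k ∈ Finset.Icc 1 n, ξ k ω) x)
    (hCV : ∀ n : ℕ, 1 ≤ n → 0 < μ {ω | η ω = n} →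
      ConsistentlyVarying (tailDist μ (fun ω => ∑ k ∈ Finset.Icc 1 n, ξ k ω))) :
    ConsistentlyVarying (tailDist μ (fun ω => ∑ k ∈ Finset.Icc 1 (η ω), ξ k ω)) :=
  randomly_stopped_sum_consistently_varying_of_partial_sums_general μ D ξ η hmeas hηmeas hindepη hηD
    hηnondeg hCV
end

section
/- Let the random variable X = (1+U)·2^G where U is uniform on [0,1] and G is geometric with parameter q ∈ (0,1) (P(G = l) = (1−q)q^l, l = 0,1,…), with U and G independent. Then the distribution function of X has a consistently varying tail but, for q ≥ 1/2, X has infinite mean E X = ∞. -/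
open Filter MeasureTheory Topology
open scoped ENNReal

lemma exists_dyadic {x : ℝ} (hx : 1 ≤ x) : ∃ k : ℕ, (2:ℝ)^k ≤ x ∧ x < 2^(k+1) := by
  set n := ⌊x⌋₊ with hn
  have hn1 : 1 ≤ n := Nat.le_floor (by exact_mod_cast hx)
  refine ⟨Nat.log 2 n, ?_, ?_⟩
  · calc (2:ℝ)^(Nat.log 2 n) = ((2^(Nat.log 2 n) : ℕ) : ℝ) := by push_cast; ring
      _ ≤ n := by exact_mod_cast Nat.pow_log_le_self 2 (by omega)
      _ ≤ x := Nat.floor_le (by linarith)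
  · have h1 : x < (n:ℝ) + 1 := Nat.lt_floor_add_one x
    have h2 : n + 1 ≤ 2^(Nat.log 2 n + 1) := Nat.lt_pow_succ_log_self (by norm_num) n
    calc x < (n:ℝ) + 1 := h1
      _ ≤ ((2^(Nat.log 2 n + 1) : ℕ) : ℝ) := by exact_mod_cast h2
      _ = 2^(Nat.log 2 n + 1) := by push_cast; ring

set_option maxHeartbeats 800000 in
lemma cv_of_formula (q : ℝ) (hq0 : 0 < q) (hq1 : q < 1) (T : ℝ → ℝ)
    (hmono : Antitone T)
    (hform : ∀ (k : ℕ) (x : ℝ), (2:ℝ)^k ≤ x → x < 2^(k+1) →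
      T x = q^k * (q + (1-q)*(2 - x/2^k))) :
    ConsistentlyVarying T := by
  have h1q : (0:ℝ) ≤ 1 - q := by linarith
  have hTpos : ∀ x : ℝ, 1 ≤ x → 0 < T x := by
    intro x hx
    obtain ⟨k, hk1, hk2⟩ := exists_dyadic hx
    have h2k : (0:ℝ) < 2^k := by positivity
    have hs2 : x / 2^k < 2 := by
      rw [div_lt_iff₀ h2k]
      calc x < 2^(k+1) := hk2
        _ = 2 * 2^k := by ring
    rw [hform k x hk1 hk2]
    have h1 : (0:ℝ) ≤ (1-q) * (2 - x/2^k) := mul_nonneg h1q (by linarith)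
    have h2 := pow_pos hq0 k
    nlinarith
  set A : ℝ → ℝ := fun y => (q + 2*(1-q)*(1-y))/q with hA
  set C : ℝ → ℝ := fun y => ((q + 2*(1-q)*(1-y))*y)/(q*(q*y+(1-q)*(2*y-1))) with hC
  set B : ℝ → ℝ := fun y => max (A y) (C y) with hB
  have key : ∀ y : ℝ, 3/4 < y → y < 1 → ∀ x : ℝ, 2 ≤ x →
      1 ≤ T (x*y) / T x ∧ T (x*y) / T x ≤ B y := by
    intro y hy34 hy1 x hx2
    have hy0 : 0 < y := by linarith
    have hy' : (0:ℝ) ≤ 1 - y := by linarith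
    have hx1 : (1:ℝ) ≤ x := by linarith
    have hxy1 : (1:ℝ) ≤ x * y := by nlinarith
    have hTx := hTpos x hx1
    have hTxy := hTpos (x*y) hxy1
    have hxyx : x * y ≤ x := by nlinarith
    refine ⟨by rw [le_div_iff₀ hTx, one_mul]; exact hmono hxyx, ?_⟩
    obtain ⟨k, hk1, hk2⟩ := exists_dyadic hx1
    have h2k : (0:ℝ) < 2^k := by positivity
    have hk2' : x < 2 * 2^k := by
      have h : ((2:ℝ))^(k+1) = 2 * 2^k := by ring
      linarith [hk2, h.symm.le]
    set s : ℝ := x / 2^k with hs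
    have hs1 : 1 ≤ s := (one_le_div h2k).2 hk1
    have hs2 : s < 2 := (div_lt_iff₀ h2k).2 (by linarith)
    have hs' : (0:ℝ) ≤ 2 - s := by linarith
    have hTxval : T x = q^k * (q + (1-q)*(2 - s)) := hform k x hk1 hk2
    have hQ : (0:ℝ) < q^k := pow_pos hq0 k
    have hDpos : 0 < q + (1-q)*(2-s) := by
      have := mul_nonneg h1q hs'
      linarith
    by_cases hcase : (2:ℝ)^k ≤ x * y
    · -- same dyadic block
      have hxy2 : x * y < 2^(k+1) := lt_of_le_of_lt hxyx hk2
      have hTxyval : T (x*y) = q^k * (q + (1-q)*(2 - x*y/2^k)) := hform k (x*y) hcase hxy2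
      have hts : x*y/2^k = y * s := by rw [hs]; ring
      refine le_trans ?_ (le_max_left _ _)
      rw [hTxval, hTxyval, hts, hA]
      rw [div_le_div_iff₀ (mul_pos hQ hDpos) hq0]
      have core : q*(q+(1-q)*(2-y*s)) ≤ (q+2*(1-q)*(1-y))*(q+(1-q)*(2-s)) := by
        nlinarith [mul_nonneg (mul_nonneg (mul_nonneg h1q hy') hs') hq0.le,
          mul_nonneg (mul_nonneg (mul_nonneg h1q h1q) hy') hs']
      calc q^k * (q + (1-q)*(2 - y*s)) * q = q^k * (q*(q+(1-q)*(2-y*s))) := by ring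
        _ ≤ q^k * ((q+2*(1-q)*(1-y))*(q+(1-q)*(2-s))) :=
            mul_le_mul_of_nonneg_left core hQ.le
        _ = (q + 2*(1-q)*(1-y)) * (q^k * (q + (1-q)*(2 - s))) := by ring
    · -- previous dyadic block
      push_neg at hcase
      have hk0 : 1 ≤ k := by
        by_contra h
        push_neg at h
        interval_cases k
        · simp at hk2'; linarith
      obtain ⟨k', rfl⟩ : ∃ k', k = k' + 1 := ⟨k - 1, by omega⟩
      have h2k' : (0:ℝ) < 2^k' := by positivity
      have h2kk : (2:ℝ)^(k'+1) = 2 * 2^k' := by ring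
      have hx' : 2 * 2^k' ≤ x := by rw [← h2kk]; exact hk1
      have hxylb : (2:ℝ)^k' ≤ x * y := by
        nlinarith [mul_le_mul_of_nonneg_right hx' hy0.le,
          mul_pos h2k' (show (0:ℝ) < 2*y - 1 by linarith)]
      have hTxyval : T (x*y) = q^k' * (q + (1-q)*(2 - x*y/2^k')) :=
        hform k' (x*y) hxylb hcase
      have hts : x*y/2^k' = 2 * y * s := by rw [hs]; field_simp; ring
      have hys1 : y * s < 1 := by
        have h : y * s = x * y / 2^(k'+1) := by rw [hs]; ring
        rw [h, div_lt_one h2k]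
        exact hcase
      refine le_trans ?_ (le_max_right _ _)
      rw [hTxval, hTxyval, hts, hC]
      have hden2 : 0 < q*y + (1-q)*(2*y-1) := by
        have h1 := mul_nonneg h1q (show (0:ℝ) ≤ 2*y-1 by linarith)
        have h2 := mul_pos hq0 hy0
        linarith
      have hf1' : 0 < q + (1-q)*(2 - 2*y*s) := by
        have h1 := mul_nonneg h1q (show (0:ℝ) ≤ 2 - 2*(y*s) by linarith)
        linarith
      rw [div_le_div_iff₀ (mul_pos hQ hDpos) (mul_pos hq0 hden2)]
      have hf1 : q + (1-q)*(2 - 2*y*s) ≤ q + 2*(1-q)*(1-y) := by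
        have hy' : y * 1 ≤ y * s := mul_le_mul_of_nonneg_left hs1 hy0.le
        have h1 := mul_le_mul_of_nonneg_left (show 2 - 2*(y*s) ≤ 2 - 2*y by linarith) h1q
        linarith
      have hf2 : q*y + (1-q)*(2*y-1) ≤ y * (q + (1-q)*(2-s)) := by
        have h1 := mul_nonneg h1q (show (0:ℝ) ≤ 1 - y*s by linarith)
        nlinarith [h1]
      have core : (q+(1-q)*(2-2*y*s)) * (q*y+(1-q)*(2*y-1)) ≤
          (q+2*(1-q)*(1-y)) * (y*(q+(1-q)*(2-s))) :=
        mul_le_mul hf1 hf2 hden2.le (by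
          have h1 := mul_nonneg (mul_nonneg (show (0:ℝ) ≤ 2 by norm_num) h1q)
            (show (0:ℝ) ≤ 1 - y by linarith)
          linarith)
      have hqQ : (0:ℝ) ≤ q * q^k' := by positivity
      calc q^k' * (q + (1-q)*(2 - 2*y*s)) * (q*(q*y+(1-q)*(2*y-1)))
          = (q * q^k') * ((q+(1-q)*(2-2*y*s)) * (q*y+(1-q)*(2*y-1))) := by ring
        _ ≤ (q * q^k') * ((q+2*(1-q)*(1-y)) * (y*(q+(1-q)*(2-s)))) :=
            mul_le_mul_of_nonneg_left core hqQ
        _ = (q + 2*(1-q)*(1-y))*y * (q^(k'+1) * (q + (1-q)*(2 - s))) := by ring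
  -- B tends to 1 at 1⁻
  have hBtend : Tendsto B (𝓝[<] (1:ℝ)) (𝓝 1) := by
    have hAc : ContinuousAt A 1 := ContinuousAt.div (by fun_prop) continuousAt_const hq0.ne'
    have hCc : ContinuousAt C 1 := by
      apply ContinuousAt.div (by fun_prop) (by fun_prop)
      have h : q * (q * 1 + (1 - q) * (2 * 1 - 1)) = q := by ring
      rw [h]; exact hq0.ne'
    have hA1 : A 1 = 1 := by
      simp only [hA]
      rw [div_eq_one_iff_eq hq0.ne']; ring
    have hC1 : C 1 = 1 := by
      simp only [hC]
      have hd : q * (q * 1 + (1 - q) * (2 * 1 - 1)) = q := by ring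
      rw [div_eq_one_iff_eq (by rw [hd]; exact hq0.ne')]
      ring
    have h := (hAc.max hCc).mono_left (nhdsWithin_le_nhds (s := Set.Iio (1:ℝ)))
    simpa [hB, hA1, hC1] using h
  apply tendsto_of_tendsto_of_tendsto_of_le_of_le' (tendsto_const_nhds (x := (1:ℝ))) hBtend
  · filter_upwards [Ioo_mem_nhdsLT_of_mem (show (1:ℝ) ∈ Set.Ioc (3/4) 1 by norm_num)]
      with y hy
    have h := key y hy.1 hy.2
    exact le_limsup_of_frequently_le
      ((eventually_atTop.2 ⟨2, fun x hx => (h x hx).1⟩).frequently)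
      (isBoundedUnder_of_eventually_le (eventually_atTop.2 ⟨2, fun x hx => (h x hx).2⟩))
  · filter_upwards [Ioo_mem_nhdsLT_of_mem (show (1:ℝ) ∈ Set.Ioc (3/4) 1 by norm_num)]
      with y hy
    have h := key y hy.1 hy.2
    exact limsup_le_of_le
      (IsCoboundedUnder.of_frequently_ge
        ((eventually_atTop.2 ⟨2, fun x hx => (h x hx).1⟩).frequently))
      (eventually_atTop.2 ⟨2, fun x hx => (h x hx).2⟩)

/-- Example 1 of the paper: if `U` is uniform on `[0,1]`, `G` is geometric with
parameter `q ∈ (0,1)`, `U` and `G` are independent, and `X = (1+U)·2^G`, then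
the distribution of `X` has a consistently varying tail, and for `q ≥ 1/2` the
mean of `X` is infinite. -/
theorem uniform_times_geometric_power_consistently_varying
    {Ω : Type*} [MeasurableSpace Ω] (μ : Measure Ω) [IsProbabilityMeasure μ]
    (U : Ω → ℝ) (G : Ω → ℕ) (q : ℝ) (hq : q ∈ Set.Ioo (0:ℝ) 1)
    (hUmeas : Measurable U) (hGmeas : Measurable G)
    (hUrange : ∀ ω, U ω ∈ Set.Icc (0:ℝ) 1)
    (hUunif : ∀ t ∈ Set.Icc (0:ℝ) 1, μ {ω | U ω ≤ t} = ENNReal.ofReal t)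
    (hGgeom : ∀ l : ℕ, μ {ω | G ω = l} = ENNReal.ofReal ((1 - q) * q ^ l))
    (hindep : ProbabilityTheory.IndepFun U G μ) :
    ConsistentlyVarying (tailDist μ (fun ω => (1 + U ω) * 2 ^ (G ω))) ∧
      (1 / 2 ≤ q →
        ∫⁻ ω, ENNReal.ofReal ((1 + U ω) * 2 ^ (G ω)) ∂μ = ⊤) := by
  obtain ⟨hq0, hq1⟩ := hq
  have h1q : (0:ℝ) < 1 - q := by linarith
  -- geometric tail
  have hGtail : ∀ m : ℕ, μ {ω | m ≤ G ω} = ENNReal.ofReal (q ^ m) := by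
    intro m
    have hset : {ω | m ≤ G ω} = ⋃ j : ℕ, {ω | G ω = m + j} := by
      ext ω
      simp only [Set.mem_setOf_eq, Set.mem_iUnion]
      constructor
      · intro h; exact ⟨G ω - m, by omega⟩
      · rintro ⟨j, hj⟩; omega
    have hmeas : ∀ j : ℕ, MeasurableSet {ω | G ω = m + j} := by
      intro j
      exact hGmeas (measurableSet_singleton (m + j))
    have hdisj : Pairwise (Function.onFun Disjoint fun j => {ω | G ω = m + j}) := by
      intro i j hij
      simp only [Function.onFun, Set.disjoint_left, Set.mem_setOf_eq]
      intro ω h1 h2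
      exact hij (by omega)
    rw [hset, measure_iUnion hdisj hmeas]
    simp_rw [hGgeom]
    have hsummable : Summable (fun j : ℕ => (1-q) * q ^ (m + j)) := by
      have : (fun j : ℕ => (1-q) * q ^ (m + j)) = fun j : ℕ => ((1-q) * q^m) * q^j := by
        funext j; rw [pow_add]; ring
      rw [this]
      exact (summable_geometric_of_lt_one hq0.le hq1).mul_left _
    rw [← ENNReal.ofReal_tsum_of_nonneg (fun j => by positivity) hsummable]
    congr 1
    have h1 : ∀ j : ℕ, (1-q) * q ^ (m + j) = ((1-q) * q^m) * q^j := by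
      intro j; rw [pow_add]; ring
    simp_rw [h1]
    rw [tsum_mul_left, tsum_geometric_of_lt_one hq0.le hq1]
    field_simp
  -- uniform tail
  have hUtail : ∀ u : ℝ, 0 ≤ u → u ≤ 1 → μ {ω | u < U ω} = ENNReal.ofReal (1 - u) := by
    intro u hu0 hu1
    have hc : {ω | u < U ω} = {ω | U ω ≤ u}ᶜ := by
      ext ω; simp [not_le]
    have hms : MeasurableSet {ω | U ω ≤ u} := hUmeas measurableSet_Iic
    rw [hc, measure_compl hms (measure_ne_top μ _),
      hUunif u ⟨hu0, hu1⟩, measure_univ, ← ENNReal.ofReal_one,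
      ← ENNReal.ofReal_sub _ hu0]
  -- the tail formula
  have hform : ∀ (k : ℕ) (x : ℝ), (2:ℝ)^k ≤ x → x < 2^(k+1) →
      tailDist μ (fun ω => (1 + U ω) * 2 ^ (G ω)) x = q^k * (q + (1-q)*(2 - x/2^k)) := by
    intro k x hk1 hk2
    have h2k : (0:ℝ) < 2^k := by positivity
    have hk2' : x < 2 * 2^k := by
      have h : ((2:ℝ))^(k+1) = 2 * 2^k := by ring
      linarith [hk2, h.symm.le]
    set u : ℝ := x/2^k - 1 with hu
    have hu0 : 0 ≤ u := by
      have := (one_le_div h2k).2 hk1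
      rw [hu]; linarith
    have hu1 : u < 1 := by
      have := (div_lt_iff₀ h2k).2 hk2'
      rw [hu]; linarith
    have hsplit : {ω | x < (1 + U ω) * 2 ^ (G ω)} =
        {ω | k+1 ≤ G ω} ∪ (U ⁻¹' (Set.Ioi u) ∩ G ⁻¹' {k}) := by
      ext ω
      have hU0 := (hUrange ω).1
      have hU1 := (hUrange ω).2
      simp only [Set.mem_setOf_eq, Set.mem_union, Set.mem_inter_iff, Set.mem_preimage,
        Set.mem_Ioi, Set.mem_singleton_iff]
      constructor
      · intro h
        rcases lt_trichotomy (G ω) k with hg | hg | hg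
        · exfalso
          have h2g : (2:ℝ)^(G ω + 1) ≤ 2^k := by
            apply pow_le_pow_right₀ (by norm_num) (by omega)
          have hle : (1 + U ω) * 2^(G ω) ≤ 2^(G ω + 1) := by
            rw [pow_succ]
            nlinarith [pow_pos (show (0:ℝ) < 2 by norm_num) (G ω)]
          linarith
        · right
          refine ⟨?_, hg⟩
          rw [hg] at h
          have := (div_lt_iff₀ h2k).mpr h
          rw [hu]; linarith
        · left; omega
      · intro h
        rcases h with hg | ⟨hu', hg⟩
        · have hle : (2:ℝ)^(k+1) ≤ 2^(G ω) := pow_le_pow_right₀ (by norm_num) hg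
          have hpos := pow_pos (show (0:ℝ) < 2 by norm_num) (G ω)
          nlinarith
        · rw [hg]
          have hlt : x/2^k < 1 + U ω := by rw [hu] at hu'; linarith
          exact (div_lt_iff₀ h2k).1 hlt
    have hdisj : Disjoint {ω | k+1 ≤ G ω} (U ⁻¹' (Set.Ioi u) ∩ G ⁻¹' {k}) := by
      rw [Set.disjoint_left]
      rintro ω h1 ⟨_, h2⟩
      simp only [Set.mem_setOf_eq] at h1
      simp only [Set.mem_preimage, Set.mem_singleton_iff] at h2
      omega
    have hmeas2 : MeasurableSet (U ⁻¹' (Set.Ioi u) ∩ G ⁻¹' {k}) :=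
      (hUmeas measurableSet_Ioi).inter (hGmeas (measurableSet_singleton k))
    have hind := hindep.measure_inter_preimage_eq_mul (Set.Ioi u) {k}
      measurableSet_Ioi (measurableSet_singleton k)
    have hUIoi : μ (U ⁻¹' (Set.Ioi u)) = ENNReal.ofReal (1 - u) := hUtail u hu0 hu1.le
    have hGk : μ (G ⁻¹' {k}) = ENNReal.ofReal ((1-q) * q^k) := hGgeom k
    have hnn1 : (0:ℝ) ≤ q^(k+1) := by positivity
    have hnn2 : (0:ℝ) ≤ (1-u) * ((1-q)*q^k) :=
      mul_nonneg (by linarith) (mul_nonneg h1q.le (pow_pos hq0 k).le)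
    unfold tailDist
    rw [hsplit, measure_union hdisj hmeas2, hGtail (k+1), hind, hUIoi, hGk,
      ← ENNReal.ofReal_mul (by linarith), ← ENNReal.ofReal_add hnn1 hnn2,
      ENNReal.toReal_ofReal (by linarith)]
    rw [hu]
    ring
  have hanti : Antitone (tailDist μ (fun ω => (1 + U ω) * 2 ^ (G ω))) := by
    intro a b hab
    unfold tailDist
    apply ENNReal.toReal_mono (measure_ne_top μ _)
    apply measure_mono
    intro ω h
    exact lt_of_le_of_lt hab h
  refine ⟨cv_of_formula q hq0 hq1 _ hanti hform, ?_⟩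
  intro hq2
  have step1 : ∀ ω, (2:ℝ≥0∞)^(G ω) ≤ ENNReal.ofReal ((1 + U ω) * 2 ^ (G ω)) := by
    intro ω
    have hU0 := (hUrange ω).1
    have h2 : ((2:ℝ≥0∞))^(G ω) = ENNReal.ofReal ((2:ℝ)^(G ω)) := by
      rw [ENNReal.ofReal_pow (by norm_num)]
      norm_num
    rw [h2]
    apply ENNReal.ofReal_le_ofReal
    nlinarith [pow_pos (show (0:ℝ) < 2 by norm_num) (G ω)]
  have step2 : ∫⁻ ω, (2:ℝ≥0∞)^(G ω) ∂μ = ∑' l : ℕ, 2^l * μ {ω | G ω = l} := by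
    have h1 : ∫⁻ ω, (2:ℝ≥0∞)^(G ω) ∂μ = ∫⁻ n, (2:ℝ≥0∞)^n ∂(μ.map G) :=
      (lintegral_map (measurable_of_countable _) hGmeas).symm
    rw [h1, lintegral_countable']
    apply tsum_congr
    intro n
    rw [Measure.map_apply hGmeas (measurableSet_singleton n)]
    congr 1
  have hsum : (⊤:ℝ≥0∞) ≤ ∑' l : ℕ, (2:ℝ≥0∞)^l * μ {ω | G ω = l} := by
    calc (⊤:ℝ≥0∞) = ∑' _ : ℕ, ENNReal.ofReal (1-q) :=
          (ENNReal.tsum_const_eq_top_of_ne_zero (by simp [ENNReal.ofReal_eq_zero]; linarith)).symm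
      _ ≤ ∑' l : ℕ, (2:ℝ≥0∞)^l * μ {ω | G ω = l} := by
          apply ENNReal.tsum_le_tsum
          intro l
          have h2l : ((2:ℝ≥0∞))^l = ENNReal.ofReal ((2:ℝ)^l) := by
            rw [ENNReal.ofReal_pow (by norm_num)]; norm_num
          rw [hGgeom l, h2l, ← ENNReal.ofReal_mul (by positivity)]
          apply ENNReal.ofReal_le_ofReal
          have hp : (1:ℝ) ≤ (2*q)^l := one_le_pow₀ (by linarith)
          have hexp : (2:ℝ)^l * ((1-q) * q^l) = (1-q) * (2*q)^l := by
            rw [mul_pow]; ring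
          rw [hexp]
          nlinarith
  have h1 : ∫⁻ ω, (2:ℝ≥0∞)^(G ω) ∂μ ≤ ∫⁻ ω, ENNReal.ofReal ((1 + U ω) * 2 ^ (G ω)) ∂μ :=
    lintegral_mono step1
  rw [step2] at h1
  exact top_le_iff.1 (le_trans hsum h1)
end
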